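/- arXiv:1808.08704 — 4 statements merged into one kernel-verified Lean document; each statement's English description precedes it below -/
import Mathlib

section
/- For 1 < b < 2, all power series coefficients of h_b(u) = u/(1-(1-u)^b) around 0 are nonnegative (in fact positive up to the factor 1/b structure). -/
/-!
Write `(1 - (1 - u) ^ b) / u = b - A(u)`. By the binomial series, for `1 ≤ b ≤ 2` every coefficient
of `A` is nonnegative, so the recursion `b c₍ₙ₊₁₎ = ∑ₖ a₍ₖ₊₁₎ c₍ₙ₋ₖ₎` for the coefficients of the
formal inverse `(b - A)⁻¹` keeps them nonnegative. For `0 < ρ < 1` we have `A(ρ) ≤ b`, and the same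
recursion gives `c_n ρ ^ n ≤ 1 / b`; hence `∑ c_n u ^ n` converges absolutely for `|u| < 1`, and the
Cauchy product with `b - A(u)` shows that its sum is `u / (1 - (1 - u) ^ b)`.
-/

open Finset PowerSeries

namespace PowerSeries

theorem constantCoeff_mul_coeff_succ_inv {K : Type*} [Field K] {φ : K⟦X⟧}
    (hφ : constantCoeff φ ≠ 0) (n : ℕ) :
    constantCoeff φ * coeff (n + 1) φ⁻¹ =
      ∑ k ∈ range (n + 1), -coeff (k + 1) φ * coeff (n - k) φ⁻¹ := by
  have h := congrArg (coeff (n + 1)) (PowerSeries.mul_inv_cancel φ hφ)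
  rw [coeff_mul, Nat.sum_antidiagonal_eq_sum_range_succ (fun i j => coeff i φ * coeff j φ⁻¹),
    sum_range_succ', coeff_one, if_neg n.succ_ne_zero] at h
  simp only [coeff_zero_eq_constantCoeff_apply, Nat.sub_zero, Nat.add_sub_add_right] at h
  simp only [neg_mul, sum_neg_distrib]
  linear_combination h

theorem coeff_inv_nonneg {K : Type*} [Field K] [LinearOrder K] [IsStrictOrderedRing K]
    {φ : K⟦X⟧} (h0 : 0 < constantCoeff φ) (hφ : ∀ n, n ≠ 0 → coeff n φ ≤ 0) (n : ℕ) :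
    0 ≤ coeff n φ⁻¹ := by
  induction n using Nat.strong_induction_on with
  | _ n ih =>
  rcases n with _ | n
  · simpa using h0.le
  · refine nonneg_of_mul_nonneg_right ?_ h0
    rw [constantCoeff_mul_coeff_succ_inv h0.ne']
    exact sum_nonneg fun k hk => mul_nonneg (neg_nonneg.2 (hφ _ k.succ_ne_zero)) (ih _ (by omega))

theorem coeff_inv_mul_pow_le {φ : ℝ⟦X⟧} (h0 : 0 < constantCoeff φ)
    (hφ : ∀ n, n ≠ 0 → coeff n φ ≤ 0) {ρ A : ℝ} (hρ : 0 ≤ ρ)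
    (hA : HasSum (fun n => coeff n φ * ρ ^ n) A) (hA0 : 0 ≤ A) (n : ℕ) :
    coeff n φ⁻¹ * ρ ^ n ≤ (constantCoeff φ)⁻¹ := by
  set a := constantCoeff φ
  have hterm (k : ℕ) : 0 ≤ -(coeff (k + 1) φ * ρ ^ (k + 1)) :=
    neg_nonneg.2 (mul_nonpos_of_nonpos_of_nonneg (hφ _ k.succ_ne_zero) (by positivity))
  have htail : HasSum (fun k => -(coeff (k + 1) φ * ρ ^ (k + 1))) (a - A) := by
    simpa using ((hasSum_nat_add_iff' 1).2 hA).neg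
  induction n using Nat.strong_induction_on with
  | _ n ih =>
  rcases n with _ | n
  · simp [a]
  · rw [← mul_le_mul_iff_of_pos_left h0, mul_inv_cancel₀ h0.ne']
    calc a * (coeff (n + 1) φ⁻¹ * ρ ^ (n + 1))
        = ∑ k ∈ range (n + 1),
            -(coeff (k + 1) φ * ρ ^ (k + 1)) * (coeff (n - k) φ⁻¹ * ρ ^ (n - k)) := by
          rw [← mul_assoc, constantCoeff_mul_coeff_succ_inv h0.ne', sum_mul]
          refine sum_congr rfl fun k hk => ?_
          rw [show n + 1 = (k + 1) + (n - k) by have := mem_range.1 hk; omega, pow_add]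
          ring
      _ ≤ ∑ k ∈ range (n + 1), -(coeff (k + 1) φ * ρ ^ (k + 1)) * a⁻¹ := by
          gcongr with k hk
          · exact hterm k
          · exact ih _ (by omega)
      _ ≤ (a - A) * a⁻¹ := by
          rw [← sum_mul]
          gcongr
          exact sum_le_hasSum _ (fun k _ => hterm k) htail
      _ ≤ 1 := by
          rw [sub_mul, mul_inv_cancel₀ h0.ne', sub_le_self_iff]
          positivity

theorem hasSum_coeff_mul_mul_pow {R : Type*} [NormedCommRing R] [CompleteSpace R]
    {φ ψ : R⟦X⟧} {x : R} (hφ : Summable fun n => ‖coeff n φ * x ^ n‖)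
    (hψ : Summable fun n => ‖coeff n ψ * x ^ n‖) :
    HasSum (fun n => coeff n (φ * ψ) * x ^ n)
      ((∑' n, coeff n φ * x ^ n) * ∑' n, coeff n ψ * x ^ n) := by
  rw [tsum_mul_tsum_eq_tsum_sum_antidiagonal_of_summable_norm hφ hψ]
  have hcoeff : (fun n => coeff n (φ * ψ) * x ^ n) =
      fun n => ∑ kl ∈ antidiagonal n, coeff kl.1 φ * x ^ kl.1 * (coeff kl.2 ψ * x ^ kl.2) := by
    funext n
    rw [coeff_mul, sum_mul]
    refine sum_congr rfl fun kl hkl => ?_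
    rw [← mem_antidiagonal.1 hkl, pow_add]
    ring
  rw [hcoeff]
  exact (summable_norm_sum_mul_antidiagonal_of_summable_norm hφ hψ).of_norm.hasSum

theorem hasSum_coeff_inv_mul_pow {𝕜 : Type*} [NormedField 𝕜] [CompleteSpace 𝕜]
    {φ : 𝕜⟦X⟧} {x : 𝕜} (hφ0 : constantCoeff φ ≠ 0)
    (hinv : Summable fun n => ‖coeff n φ⁻¹ * x ^ n‖) (hφ : Summable fun n => ‖coeff n φ * x ^ n‖) :
    HasSum (fun n => coeff n φ⁻¹ * x ^ n) (∑' n, coeff n φ * x ^ n)⁻¹ := by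
  have h := hasSum_coeff_mul_mul_pow hinv hφ
  rw [PowerSeries.inv_mul_cancel φ hφ0] at h
  have h1 : HasSum (fun n => coeff n (1 : 𝕜⟦X⟧) * x ^ n) 1 := by
    convert hasSum_ite_eq 0 (1 : 𝕜) using 2 with n
    rcases n with _ | n <;> simp
  rw [← eq_inv_of_mul_eq_one_left (h.unique h1)]
  exact hinv.of_norm.hasSum

end PowerSeries

theorem summable_norm_mul_pow_of_mul_pow_le {c : ℕ → ℝ} {ρ C u : ℝ} (hc0 : ∀ n, 0 ≤ c n)
    (hc : ∀ n, c n * ρ ^ n ≤ C) (hu : |u| < ρ) : Summable fun n => ‖c n * u ^ n‖ := by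
  have hρ : 0 < ρ := (abs_nonneg u).trans_lt hu
  have hq : |u| / ρ < 1 := (div_lt_one hρ).2 hu
  refine ((summable_geometric_of_lt_one (by positivity) hq).mul_left C).of_nonneg_of_le
    (fun _ => norm_nonneg _) fun n => ?_
  calc ‖c n * u ^ n‖ = c n * ρ ^ n * (|u| / ρ) ^ n := by
        rw [norm_mul, norm_pow, Real.norm_eq_abs, Real.norm_eq_abs, abs_of_nonneg (hc0 n), div_pow,
          mul_assoc, mul_div_cancel₀ _ (pow_ne_zero n hρ.ne')]
    _ ≤ C * (|u| / ρ) ^ n := by gcongr; exact hc n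

theorem Ring.choose_succ_mul_succ {K : Type*} [Field K] [CharZero K] (b : K) (n : ℕ) :
    Ring.choose b (n + 1) * (n + 1) = Ring.choose b n * (b - n) := by
  simp only [Ring.choose_eq_smul, descPochhammer_succ_right, Polynomial.smeval_mul,
    Polynomial.smeval_sub, Polynomial.smeval_X, Polynomial.smeval_natCast, Nat.factorial_succ,
    smul_eq_mul, pow_one, pow_zero]
  push_cast
  field_simp
  ring

-- The Taylor series of `u ↦ (1 - (1 - u) ^ b) / u` at `0`.
noncomputable def sibuyaSeries (b : ℝ) : ℝ⟦X⟧ := mk fun n => (-1) ^ n * Ring.choose b (n + 1)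

theorem constantCoeff_sibuyaSeries (b : ℝ) : constantCoeff (sibuyaSeries b) = b := by
  simp [sibuyaSeries, ← coeff_zero_eq_constantCoeff_apply]

theorem coeff_sibuyaSeries_nonpos {b : ℝ} (hb1 : 1 ≤ b) (hb2 : b ≤ 2) {n : ℕ} (hn : n ≠ 0) :
    coeff n (sibuyaSeries b) ≤ 0 := by
  obtain ⟨m, rfl⟩ := Nat.exists_eq_succ_of_ne_zero hn
  simp only [sibuyaSeries, coeff_mk]
  clear hn
  induction m with
  | zero =>
    have h := Ring.choose_succ_mul_succ b 1
    rw [Ring.choose_one_right] at h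
    norm_num at h ⊢
    nlinarith
  | succ m ih =>
    have h := Ring.choose_succ_mul_succ b (m + 2)
    refine nonpos_of_mul_nonpos_left (b := (m : ℝ) + 3) ?_ (by positivity)
    calc (-1) ^ (m + 1 + 1) * Ring.choose b (m + 1 + 1 + 1) * ((m : ℝ) + 3)
        = (-1) ^ (m + 1) * Ring.choose b (m + 1 + 1) * ((m : ℝ) + 2 - b) := by
          rw [mul_assoc, show ((m : ℝ) + 3) = ((m + 2 : ℕ) : ℝ) + 1 by push_cast; ring, h]
          push_cast
          ring
      _ ≤ 0 := mul_nonpos_of_nonpos_of_nonneg ih (by linarith)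

theorem hasSum_coeff_sibuyaSeries_mul_pow (b : ℝ) {u : ℝ} (hu0 : u ≠ 0) (hu : |u| < 1) :
    HasSum (fun n => coeff n (sibuyaSeries b) * u ^ n) ((1 - (1 - u) ^ b) / u) := by
  have hbin : HasSum (fun m => Ring.choose b m * (-u) ^ m) ((1 - u) ^ b) := by
    have hmem : -u ∈ Metric.eball (0 : ℝ) 1 := by
      simpa [enorm_eq_nnnorm, ← NNReal.coe_lt_coe] using hu
    simpa [_root_.binomialSeries, FormalMultilinearSeries.coeff_ofScalars, sub_eq_add_neg,
      mul_comm] using Real.one_add_rpow_hasFPowerSeriesOnBall_zero (a := b) |>.hasSum hmem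
  have hshift := ((hasSum_nat_add_iff' 1).2 hbin).div_const (-u)
  have hterm : (fun n => coeff n (sibuyaSeries b) * u ^ n) =
      fun n => Ring.choose b (n + 1) * (-u) ^ (n + 1) / -u := by
    funext n
    simp only [sibuyaSeries, coeff_mk, pow_succ, neg_pow u]
    field_simp
  have hval : (1 - (1 - u) ^ b) / u =
      ((1 - u) ^ b - ∑ i ∈ range 1, Ring.choose b i * (-u) ^ i) / -u := by
    simp only [sum_range_one, Ring.choose_zero_right, pow_zero, mul_one]
    field_simp
    ring
  rw [hterm, hval]
  exact hshift

theorem summable_norm_coeff_sibuyaSeries_mul_pow (b : ℝ) {u : ℝ} (hu : |u| < 1) :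
    Summable fun n => ‖coeff n (sibuyaSeries b) * u ^ n‖ := by
  obtain ⟨t, hut, ht1⟩ := exists_between hu
  have ht0 : 0 < t := (abs_nonneg u).trans_lt hut
  have hs : Summable fun m => ‖Ring.choose b m * t ^ m‖ := by
    have hmem : t ∈ Metric.eball (0 : ℝ) (_root_.binomialSeries ℝ b).radius := by
      refine lt_of_lt_of_le ?_ binomialSeries_radius_ge_one
      simpa [enorm_eq_nnnorm, ← NNReal.coe_lt_coe, abs_of_pos ht0] using ht1
    simpa [_root_.binomialSeries, FormalMultilinearSeries.coeff_ofScalars, mul_comm] using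
      (_root_.binomialSeries ℝ b).summable_norm_apply hmem
  refine (((summable_nat_add_iff 1).2 hs).div_const t).of_nonneg_of_le (fun _ => norm_nonneg _)
    fun n => ?_
  simp only [sibuyaSeries, coeff_mk, norm_mul, norm_pow, norm_neg, norm_one, one_pow, one_mul,
    Real.norm_eq_abs, abs_of_pos ht0, pow_succ, mul_div_assoc, mul_div_cancel_right₀ _ ht0.ne']
  gcongr

/-- For `1 < b < 2`, the power series coefficients of `h_b(u) = u/(1-(1-u)^b)` at `0`
are all nonnegative. -/
theorem sibuya_nonneg_coeff (b : ℝ) (hb1 : 1 < b) (hb2 : b < 2) :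
    ∃ c : ℕ → ℝ, (∀ n : ℕ, 0 ≤ c n) ∧
      ∃ r : ℝ, 0 < r ∧ ∀ u : ℝ, 0 < |u| → |u| < r →
        HasSum (fun n : ℕ => c n * u ^ n) (u / (1 - (1 - u) ^ b)) := by
  have hb0 : 0 < constantCoeff (sibuyaSeries b) := by rw [constantCoeff_sibuyaSeries]; linarith
  have hnonpos : ∀ n, n ≠ 0 → coeff n (sibuyaSeries b) ≤ 0 :=
    fun _ => coeff_sibuyaSeries_nonpos hb1.le hb2.le
  have hc0 := coeff_inv_nonneg hb0 hnonpos
  refine ⟨fun n => coeff n (sibuyaSeries b)⁻¹, hc0, 1, one_pos, fun u hu0 hu1 => ?_⟩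
  obtain ⟨ρ, huρ, hρ1⟩ := exists_between hu1
  have hρ0 : 0 < ρ := hu0.trans huρ
  have hsumρ := hasSum_coeff_sibuyaSeries_mul_pow b hρ0.ne' (by rwa [abs_of_pos hρ0])
  have hvalρ : 0 ≤ (1 - (1 - ρ) ^ b) / ρ :=
    div_nonneg (sub_nonneg.2 (Real.rpow_le_one (by linarith) (by linarith) (by linarith))) hρ0.le
  have hinv := summable_norm_mul_pow_of_mul_pow_le hc0
    (coeff_inv_mul_pow_le hb0 hnonpos hρ0.le hsumρ hvalρ) huρ
  have h := hasSum_coeff_inv_mul_pow hb0.ne' hinv (summable_norm_coeff_sibuyaSeries_mul_pow b hu1)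
  rwa [(hasSum_coeff_sibuyaSeries_mul_pow b (abs_pos.1 hu0) hu1).tsum_eq, inv_div] at h
end

section
/- For b > 3, the coefficient P_5 = (9-b²)(b²-1)/4 in the expansion of bu/(1-(1-u)^b) is negative; hence the Sibuya distribution s_{1/b} is not a progeny for b > 3. -/
/-!
If `u / (1 - (1 - u) ^ b) = ∑ cₙ uⁿ` on a punctured neighbourhood of `0`, then multiplying by the
binomial series of `(1 - u) ^ b` and using uniqueness of power series coefficients shows that `c`
solves the triangular system `cₙ - ∑_{i+j=n} cᵢ binom(b, j) (-1)ʲ = [n = 1]`. Solving it gives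
`c₅ = (9 - b²)(b² - 1) / (480 b) = P₅ / (5! b)`, which is negative for `b > 3`.
-/

open Filter Topology Finset FormalMultilinearSeries
open scoped ENNReal

theorem Ring.choose_succ_eq_mul_div {K : Type*} [Field K] [CharZero K] (r : K) (k : ℕ) :
    Ring.choose r (k + 1) = Ring.choose r k * (r - k) / (k + 1) := by
  have h := Ring.choose_smul_choose r (Nat.le_succ k)
  rw [Nat.choose_succ_self_right, Nat.succ_sub (le_refl k), Nat.sub_self, Ring.choose_one_right,
    nsmul_eq_mul] at h
  rw [← h]
  field_simp
  push_cast
  ring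

section PowerSeries

variable {𝕜 : Type*} [NontriviallyNormedField 𝕜]

theorem le_radius_ofScalars_of_summable {c : ℕ → 𝕜} {u : 𝕜}
    (h : Summable fun n => c n * u ^ n) : (‖u‖₊ : ℝ≥0∞) ≤ (ofScalars 𝕜 c).radius := by
  refine le_radius_of_tendsto _ (l := 0) ?_
  simpa [ofScalars_norm, norm_mul, norm_pow] using h.tendsto_atTop_zero.norm

theorem eventually_summable_norm_mul_pow {c : ℕ → 𝕜} {g : 𝕜 → 𝕜}
    (h : ∀ᶠ u in 𝓝[≠] 0, HasSum (fun n => c n * u ^ n) (g u)) :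
    ∀ᶠ u in 𝓝 0, Summable fun n => ‖c n * u ^ n‖ := by
  obtain ⟨v, hv, hv0⟩ := (h.and self_mem_nhdsWithin).exists
  have hpos : 0 < (ofScalars 𝕜 c).radius :=
    lt_of_lt_of_le (by simpa using hv0) (le_radius_ofScalars_of_summable hv.summable)
  filter_upwards [Metric.eball_mem_nhds (0 : 𝕜) hpos] with u hu
  simpa [ofScalars_apply_eq, norm_mul, norm_pow, mul_comm] using
    (ofScalars 𝕜 c).summable_norm_apply hu

theorem eq_of_eventually_hasSum_mul_pow [CompleteSpace 𝕜] {c d : ℕ → 𝕜} {g : 𝕜 → 𝕜}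
    (hc : ∀ᶠ u in 𝓝[≠] 0, HasSum (fun n => c n * u ^ n) (g u))
    (hd : ∀ᶠ u in 𝓝[≠] 0, HasSum (fun n => d n * u ^ n) (g u)) : c = d := by
  have he : ∀ᶠ u in 𝓝[≠] 0, HasSum (fun n => (c - d) n * u ^ n) 0 := by
    filter_upwards [hc, hd] with u hcu hdu
    simpa [sub_mul] using hcu.sub hdu
  obtain ⟨v, hv, hv0⟩ := (he.and self_mem_nhdsWithin).exists
  have hpos : 0 < (ofScalars 𝕜 (c - d)).radius :=
    lt_of_lt_of_le (by simpa using hv0) (le_radius_ofScalars_of_summable hv.summable)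
  have hsum := ((ofScalars 𝕜 (c - d)).hasFPowerSeriesOnBall hpos).hasFPowerSeriesAt
  rw [← sub_eq_zero, ← ofScalars_series_eq_zero (E := 𝕜)]
  by_contra hne
  obtain ⟨u, hu, hu0⟩ := ((hsum.locally_ne_zero hne).and he).exists
  exact hu (by simpa [FormalMultilinearSeries.sum, ofScalars_apply_eq, mul_comm] using hu0.tsum_eq)

theorem hasSum_antidiagonal_mul_pow [CompleteSpace 𝕜] {c a : ℕ → 𝕜} {u : 𝕜}
    (hc : Summable fun n => ‖c n * u ^ n‖) (ha : Summable fun n => ‖a n * u ^ n‖) :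
    HasSum (fun n => (∑ kl ∈ antidiagonal n, c kl.1 * a kl.2) * u ^ n)
      ((∑' n, c n * u ^ n) * ∑' n, a n * u ^ n) := by
  have hterm : ∀ n, (∑ kl ∈ antidiagonal n, c kl.1 * a kl.2) * u ^ n
      = ∑ kl ∈ antidiagonal n, c kl.1 * u ^ kl.1 * (a kl.2 * u ^ kl.2) := by
    intro n
    rw [sum_mul]
    refine sum_congr rfl fun kl hkl => ?_
    rw [← mem_antidiagonal.mp hkl, pow_add]
    ring
  simp_rw [hterm, tsum_mul_tsum_eq_tsum_sum_antidiagonal_of_summable_norm hc ha]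
  exact (summable_norm_sum_mul_antidiagonal_of_summable_norm hc ha).of_norm.hasSum

end PowerSeries

theorem eventually_hasSum_one_sub_rpow (b : ℝ) :
    ∀ᶠ u in 𝓝 0, HasSum (fun n => Ring.choose b n * (-1) ^ n * u ^ n) ((1 - u) ^ b) := by
  filter_upwards [Metric.eball_mem_nhds (0 : ℝ) zero_lt_one] with u hu
  have hu' : -u ∈ Metric.eball (0 : ℝ) 1 := by simpa using hu
  have h := (Real.one_add_rpow_hasFPowerSeriesOnBall_zero (a := b)).hasSum hu'
  rw [zero_add, ← sub_eq_add_neg] at h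
  have hcoeff : ∀ n, (binomialSeries ℝ b n fun _ => -u) = Ring.choose b n * (-1) ^ n * u ^ n := by
    intro n
    rw [binomialSeries, ofScalars_apply_eq, smul_eq_mul, neg_pow, mul_assoc]
  simpa only [hcoeff] using h

theorem coeff_sub_antidiagonal_choose_of_eventually_hasSum {b : ℝ} (hb : b ≠ 0) {c : ℕ → ℝ}
    (hc : ∀ᶠ u in 𝓝[≠] 0, HasSum (fun n => c n * u ^ n) (u / (1 - (1 - u) ^ b))) (n : ℕ) :
    c n - ∑ kl ∈ antidiagonal n, c kl.1 * (Ring.choose b kl.2 * (-1) ^ kl.2)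
      = if n = 1 then 1 else 0 := by
  have hbin : ∀ᶠ u in 𝓝[≠] 0,
      HasSum (fun n => Ring.choose b n * (-1) ^ n * u ^ n) ((1 - u) ^ b) :=
    nhdsWithin_le_nhds (eventually_hasSum_one_sub_rpow b)
  have hbin_abs := eventually_summable_norm_mul_pow hbin
  have hc_abs := eventually_summable_norm_mul_pow hc
  refine congrFun (eq_of_eventually_hasSum_mul_pow (g := fun u => u)
    (c := fun n => c n - ∑ kl ∈ antidiagonal n, c kl.1 * (Ring.choose b kl.2 * (-1) ^ kl.2))
    (d := fun n => if n = 1 then 1 else 0) ?_ ?_) n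
  · filter_upwards [hc, hbin, nhdsWithin_le_nhds hc_abs, nhdsWithin_le_nhds hbin_abs,
      self_mem_nhdsWithin, nhdsWithin_le_nhds (Iio_mem_nhds zero_lt_one)]
      with u hcu hbu hcu_abs hbu_abs hu0 hu1
    have hden : 1 - (1 - u) ^ b ≠ 0 := by
      intro h
      have h1 : (1 - u) ^ b = 1 ^ b := by rw [Real.one_rpow]; linarith
      rw [Real.rpow_left_inj (by linarith [Set.mem_Iio.mp hu1]) zero_le_one hb] at h1
      exact hu0 (show u = 0 by linarith)
    have hprod := hasSum_antidiagonal_mul_pow hcu_abs hbu_abs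
    rw [hcu.tsum_eq, hbu.tsum_eq] at hprod
    have hsub := hcu.sub hprod
    rw [← mul_one_sub, div_mul_cancel₀ _ hden] at hsub
    simpa only [sub_mul] using hsub
  · filter_upwards with u
    have hterm : (fun n => (if n = 1 then (1 : ℝ) else 0) * u ^ n)
        = fun n => if n = 1 then u else 0 := by
      ext n
      split_ifs with hn <;> simp [hn]
    exact hterm ▸ hasSum_ite_eq 1 u

theorem coeff_five_eq_of_antidiagonal_choose {b : ℝ} (hb : b ≠ 0) {c : ℕ → ℝ}
    (h : ∀ n, c n - ∑ kl ∈ antidiagonal n, c kl.1 * (Ring.choose b kl.2 * (-1) ^ kl.2)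
      = if n = 1 then 1 else 0) :
    c 5 = (9 - b ^ 2) * (b ^ 2 - 1) / (480 * b) := by
  have e : ∀ n ∈ [1, 2, 3, 4, 5, 6], _ := fun n _ => h n
  simp [Nat.antidiagonal_succ, Ring.choose_succ_eq_mul_div] at e
  obtain ⟨e1, e2, e3, e4, e5, e6⟩ := e
  have c0 : c 0 = 1 / b := by field_simp; linarith
  have c1 : c 1 = (b - 1) / (2 * b) := by
    rw [c0] at e2; field_simp at e2 ⊢; linarith
  have c2 : c 2 = (b ^ 2 - 1) / (12 * b) := by
    rw [c0, c1] at e3; field_simp at e3 ⊢; linarith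
  have c3 : c 3 = (b ^ 2 - 1) / (24 * b) := by
    rw [c0, c1, c2] at e4; field_simp at e4 ⊢; linarith
  have c4 : c 4 = (-b ^ 4 + 20 * b ^ 2 - 19) / (720 * b) := by
    rw [c0, c1, c2, c3] at e5; field_simp at e5 ⊢; linarith
  rw [c0, c1, c2, c3, c4] at e6; field_simp at e6 ⊢; linarith

/-- For `b > 3`, `P₅ = (9-b²)(b²-1)/4 < 0`; hence `u/(1-(1-u)^b)` does not have all
nonnegative Taylor coefficients at `0`, i.e. the Sibuya distribution `s_{1/b}` is not
a progeny. -/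
theorem sibuya_not_progeny_gt_three (b : ℝ) (hb : 3 < b) :
    (9 - b ^ 2) * (b ^ 2 - 1) / 4 < 0 ∧
    ¬ ∃ c : ℕ → ℝ, (∀ n : ℕ, 0 ≤ c n) ∧
      ∃ r : ℝ, 0 < r ∧ ∀ u : ℝ, 0 < |u| → |u| < r →
        HasSum (fun n : ℕ => c n * u ^ n) (u / (1 - (1 - u) ^ b)) := by
  have hP5 : (9 - b ^ 2) * (b ^ 2 - 1) < 0 := mul_neg_of_neg_of_pos (by nlinarith) (by nlinarith)
  refine ⟨by linarith, ?_⟩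
  rintro ⟨c, hc, r, hr, hsum⟩
  have hc_near : ∀ᶠ u in 𝓝[≠] 0, HasSum (fun n => c n * u ^ n) (u / (1 - (1 - u) ^ b)) := by
    filter_upwards [self_mem_nhdsWithin, nhdsWithin_le_nhds (Metric.ball_mem_nhds 0 hr)]
      with u hu0 hur
    exact hsum u (abs_pos.mpr hu0) (by simpa using hur)
  have hb0 : b ≠ 0 := by positivity
  have hc5 := coeff_five_eq_of_antidiagonal_choose hb0
    (coeff_sub_antidiagonal_choose_of_eventually_hasSum hb0 hc_near)
  have : (9 - b ^ 2) * (b ^ 2 - 1) / (480 * b) < 0 := div_neg_of_neg_of_pos hP5 (by positivity)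
  linarith [hc 5]
end

section
/- Let F(v) = 1+v+Σ_{n≥2}A_n v^n and G(v) = 1-v+Σ_{n≥2}a_n v^n be formal power series with F·G = 1, a_n > 0 for all n ≥ 2, and Σ_{n≥2} a_n = ∞. Then there exists n ≥ 2 with A_n < 0. -/
/-!
Comparing coefficients of `v^(n+2)` in `F·G = 1` gives
`a_{n+2} - A_{n+1} + A_{n+2} + Σ_{k=1}^{n} A_k a_{n+2-k} = 0`.
If every `A_k` with `k ≥ 1` were nonnegative, the sum would be nonnegative, so
`a_{n+2} ≤ A_{n+1} - A_{n+2}`; these bounds telescope to `Σ_{n<N} a_{n+2} ≤ A_1`,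
and the positive series `Σ a_n` would converge.
-/

namespace PowerSeries

variable {R : Type*} [CommRing R] {F G : R⟦X⟧}

theorem sum_range_coeff_mul_eq_zero_of_mul_eq_one (hFG : F * G = 1) {n : ℕ} (hn : n ≠ 0) :
    ∑ k ∈ Finset.range (n + 1), coeff k F * coeff (n - k) G = 0 := by
  have h := congrArg (coeff n) hFG
  rwa [coeff_mul, coeff_one, if_neg hn, Finset.Nat.sum_antidiagonal_eq_sum_range_succ_mk] at h

variable [LinearOrder R] [IsStrictOrderedRing R]

theorem coeff_add_two_le_of_mul_eq_one (hFG : F * G = 1) (hF0 : coeff 0 F = 1)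
    (hG0 : coeff 0 G = 1) (hG1 : coeff 1 G = -1) (hF : ∀ k, 1 ≤ k → 0 ≤ coeff k F)
    (hG : ∀ k, 2 ≤ k → 0 ≤ coeff k G) (n : ℕ) :
    coeff (n + 2) G ≤ coeff (n + 1) F - coeff (n + 2) F := by
  have h := sum_range_coeff_mul_eq_zero_of_mul_eq_one hFG (n := n + 2) (by omega)
  rw [Finset.sum_range_succ, Finset.sum_range_succ, Finset.sum_range_succ'] at h
  have hmid : 0 ≤ ∑ k ∈ Finset.range n, coeff (k + 1) F * coeff (n + 2 - (k + 1)) G :=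
    Finset.sum_nonneg fun k hk =>
      mul_nonneg (hF _ (by omega)) (hG _ (by have := Finset.mem_range.mp hk; omega))
  simp only [Nat.sub_zero, Nat.sub_self, show n + 2 - (n + 1) = 1 by omega,
    hF0, hG0, hG1] at h
  linarith

theorem sum_range_coeff_add_two_le_of_mul_eq_one (hFG : F * G = 1) (hF0 : coeff 0 F = 1)
    (hG0 : coeff 0 G = 1) (hG1 : coeff 1 G = -1) (hF : ∀ k, 1 ≤ k → 0 ≤ coeff k F)
    (hG : ∀ k, 2 ≤ k → 0 ≤ coeff k G) (N : ℕ) :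
    ∑ n ∈ Finset.range N, coeff (n + 2) G ≤ coeff 1 F :=
  calc ∑ n ∈ Finset.range N, coeff (n + 2) G
      ≤ ∑ n ∈ Finset.range N, (coeff (n + 1) F - coeff (n + 2) F) :=
        Finset.sum_le_sum fun n _ => coeff_add_two_le_of_mul_eq_one hFG hF0 hG0 hG1 hF hG n
    _ = coeff 1 F - coeff (N + 1) F := Finset.sum_range_sub' (fun n => coeff (n + 1) F) N
    _ ≤ coeff 1 F := sub_le_self _ (hF _ (by omega))

end PowerSeries

/-- If `F = 1 + v + Σ_{n≥2} A_n vⁿ` and `G = 1 - v + Σ_{n≥2} a_n vⁿ` are formal power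
series with `F·G = 1`, `a_n > 0` for `n ≥ 2` and `Σ_{n≥2} a_n = ∞`, then some
coefficient `A_n` (`n ≥ 2`) of `F` is negative. -/
theorem exists_neg_coeff (F G : PowerSeries ℝ) (hFG : F * G = 1)
    (hF0 : PowerSeries.coeff (R := ℝ) 0 F = 1) (hF1 : PowerSeries.coeff (R := ℝ) 1 F = 1)
    (hG0 : PowerSeries.coeff (R := ℝ) 0 G = 1) (hG1 : PowerSeries.coeff (R := ℝ) 1 G = -1)
    (hpos : ∀ n : ℕ, 2 ≤ n → 0 < PowerSeries.coeff (R := ℝ) n G)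
    (hdiv : ¬ Summable (fun n : ℕ => PowerSeries.coeff (R := ℝ) (n + 2) G)) :
    ∃ n : ℕ, 2 ≤ n ∧ PowerSeries.coeff (R := ℝ) n F < 0 := by
  by_contra! hA
  have hF : ∀ k, 1 ≤ k → 0 ≤ PowerSeries.coeff k F := by
    rintro k hk
    rcases hk.eq_or_lt with rfl | hk
    · exact hF1 ▸ zero_le_one
    · exact hA k hk
  have hG : ∀ k, 2 ≤ k → 0 ≤ PowerSeries.coeff k G := fun k hk => (hpos k hk).le
  exact hdiv <| summable_of_sum_range_le (fun n => hG _ (by omega))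
    (PowerSeries.sum_range_coeff_add_two_le_of_mul_eq_one hFG hF0 hG0 hG1 hF hG)
end

section
/- Let p be an offspring distribution with probability generating function f_p of radius of convergence R ≥ 1, with progeny generating function f_q satisfying f_q(z) = z f_p(f_q(z)). Fix r ∈ (0,R) with r f_p'(r)/f_p(r) ≤ 1, define f_{p^{(r)}}(z) = f_p(rz)/f_p(r), and let ρ satisfy r = f_q(ρ). Then f_{q^{(ρ)}}(z) := f_q(ρz)/f_q(ρ) satisfies f_{q^{(ρ)}}(z) = z f_{p^{(r)}}(f_{q^{(ρ)}}(z)); i.e., the progeny of the exponentially tilted offspring law p^{(r)} is the exponentially tilted law q^{(ρ)}. -/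
/-!
Write `a = f_q(ρ)` and `b = f_q(ρz)`. The progeny equation at `ρ` and at `ρz` gives
`a = ρ f_p(a)` and `b = ρz f_p(b)`; since `r = a`, the argument `r · (b / a)` of the tilted
offspring law is just `b`, and both sides of the claim reduce to `z f_p(b) / f_p(a)`.
-/

noncomputable def expTilt (f : ℝ → ℝ) (r : ℝ) : ℝ → ℝ := fun z => f (r * z) / f r

theorem expTilt_progeny_eq {f g : ℝ → ℝ} {ρ z : ℝ} (hρ : g ρ = ρ * f (g ρ))
    (hρz : g (ρ * z) = ρ * z * f (g (ρ * z))) (hg : g ρ ≠ 0) :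
    expTilt g ρ z = z * expTilt f (g ρ) (expTilt g ρ z) := by
  have hf : f (g ρ) ≠ 0 := fun h => hg (by rw [hρ, h, mul_zero])
  simp only [expTilt, mul_div_cancel₀ _ hg]
  field_simp
  linear_combination f (g ρ) * hρz - z * f (g (ρ * z)) * hρ

theorem tilted_progeny_general (fp fq : ℝ → ℝ) (R r ρ : ℝ)
    (hρ : ρ ∈ Set.Ioc (0:ℝ) 1) (hr : r ∈ Set.Ioo (0:ℝ) R)
    (heq : ∀ z ∈ Set.Icc (0:ℝ) 1, fq z = z * fp (fq z))
    (hrρ : r = fq ρ) :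
    ∀ z ∈ Set.Icc (0:ℝ) 1,
      fq (ρ * z) / fq ρ = z * (fp (r * (fq (ρ * z) / fq ρ)) / fp r) := by
  intro z ⟨hz0, hz1⟩
  subst hrρ
  have hρz : ρ * z ∈ Set.Icc (0:ℝ) 1 :=
    ⟨mul_nonneg hρ.1.le hz0, mul_le_one₀ hρ.2 hz0 hz1⟩
  exact expTilt_progeny_eq (heq ρ (Set.Ioc_subset_Icc_self hρ)) (heq _ hρz) hr.1.ne'

/-- Exponential tilting of branching processes: if `f_q(z) = z f_p(f_q(z))` and
`r = f_q(ρ)` with `ρ ∈ (0,1]`, `f_p` having radius of convergence `R ≥ 1`, `r ∈ (0,R)`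
and `r f_p'(r)/f_p(r) ≤ 1`, then `f_{q^{(ρ)}}(z) := f_q(ρz)/f_q(ρ)` satisfies the
progeny equation for the tilted offspring law `f_{p^{(r)}}(z) = f_p(rz)/f_p(r)`. -/
theorem tilted_progeny (fp fq : ℝ → ℝ) (R r ρ : ℝ) (hR : 1 ≤ R)
    (hρ : ρ ∈ Set.Ioc (0:ℝ) 1) (hr : r ∈ Set.Ioo (0:ℝ) R)
    (heq : ∀ z ∈ Set.Icc (0:ℝ) 1, fq z = z * fp (fq z))
    (hrρ : r = fq ρ)
    (hm : r * deriv fp r / fp r ≤ 1)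
    (hfp : fp r ≠ 0) :
    ∀ z ∈ Set.Icc (0:ℝ) 1,
      fq (ρ * z) / fq ρ = z * (fp (r * (fq (ρ * z) / fq ρ)) / fp r) :=
  tilted_progeny_general fp fq R r ρ hρ hr heq hrρ
end
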